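/- The Cayley transform C(A) = (I - A)⁻¹(I + A) is Lipschitz continuous on g_Q = {A : QA + AᵀQ = 0} (Q symmetric positive definite) with Lipschitz constant 2 with respect to the operator norm induced by the Q-norm. -/

import Mathlib

/-!
For `A ∈ g_Q` the cross terms of `‖(1 - A) x‖_Q²` cancel, so `‖(1 - A) x‖_Q² = ‖x‖_Q² + ‖A x‖_Q²`:
`1 - A` is invertible and `(1 - A)⁻¹` does not increase the `Q`-norm. Since `C(A) = 2 (1 - A)⁻¹ - 1`,
the resolvent identity gives `C(A) - C(B) = 2 (1 - A)⁻¹ (A - B) (1 - B)⁻¹`, and the two outer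
factors are `Q`-contractions.
-/

open Matrix

/-- The `Q`-norm of a vector, `‖x‖_Q = √(xᵀ Q x)`. -/
noncomputable def qnorm {n : ℕ} (Q : Matrix (Fin n) (Fin n) ℝ) (x : Fin n → ℝ) : ℝ :=
  Real.sqrt (x ⬝ᵥ Q.mulVec x)

/-- The operator norm on `ℝ^{n×n}` induced by the `Q`-norm. -/
noncomputable def qOpNorm {n : ℕ} (Q M : Matrix (Fin n) (Fin n) ℝ) : ℝ :=
  sInf {c : ℝ | 0 ≤ c ∧ ∀ x : Fin n → ℝ, qnorm Q (M.mulVec x) ≤ c * qnorm Q x}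

/-- The Cayley transform `C(A) = (I - A)⁻¹ (I + A)`. -/
noncomputable def cayley {n : ℕ} (A : Matrix (Fin n) (Fin n) ℝ) : Matrix (Fin n) (Fin n) ℝ :=
  (1 - A)⁻¹ * (1 + A)

theorem LinearMap.exists_bound_of_finiteDimensional {𝕜 E F : Type*} [NontriviallyNormedField 𝕜]
    [CompleteSpace 𝕜] [NormedAddCommGroup E] [NormedSpace 𝕜 E] [FiniteDimensional 𝕜 E]
    [NormedAddCommGroup F] [NormedSpace 𝕜 F] (f : E →ₗ[𝕜] F) :
    ∃ c, 0 ≤ c ∧ ∀ x, ‖f x‖ ≤ c * ‖x‖ :=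
  ⟨‖f.toContinuousLinearMap‖, norm_nonneg _, f.toContinuousLinearMap.le_opNorm⟩

theorem Matrix.dotProduct_mulVec_one_sub_mulVec {ι R : Type*} [Fintype ι] [DecidableEq ι]
    [CommRing R] {Q A : Matrix ι ι R} (hA : Q * A + Aᵀ * Q = 0) (x : ι → R) :
    (1 - A) *ᵥ x ⬝ᵥ Q *ᵥ ((1 - A) *ᵥ x) = x ⬝ᵥ Q *ᵥ x + A *ᵥ x ⬝ᵥ Q *ᵥ (A *ᵥ x) := by
  have hcross : x ⬝ᵥ Q *ᵥ (A *ᵥ x) + A *ᵥ x ⬝ᵥ Q *ᵥ x = x ⬝ᵥ (Q * A + Aᵀ * Q) *ᵥ x := by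
    rw [add_mulVec, dotProduct_add, ← mulVec_mulVec, ← mulVec_mulVec, dotProduct_mulVec x Aᵀ,
      vecMul_transpose]
  rw [hA, zero_mulVec, dotProduct_zero] at hcross
  simp only [sub_mulVec, one_mulVec, mulVec_sub, sub_dotProduct, dotProduct_sub]
  linear_combination -hcross

section SkewCayley

variable {n : ℕ} {Q A B : Matrix (Fin n) (Fin n) ℝ}

theorem qnorm_nonneg (Q : Matrix (Fin n) (Fin n) ℝ) (x : Fin n → ℝ) : 0 ≤ qnorm Q x :=
  Real.sqrt_nonneg _

theorem qnorm_pos (hQ : Q.PosDef) {x : Fin n → ℝ} (hx : x ≠ 0) : 0 < qnorm Q x :=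
  Real.sqrt_pos.mpr (by simpa using hQ.dotProduct_mulVec_pos hx)

theorem qnorm_smul (Q : Matrix (Fin n) (Fin n) ℝ) (c : ℝ) (x : Fin n → ℝ) :
    qnorm Q (c • x) = |c| * qnorm Q x := by
  rw [qnorm, qnorm, mulVec_smul, smul_dotProduct, dotProduct_smul, smul_eq_mul, smul_eq_mul,
    ← mul_assoc, ← sq, Real.sqrt_mul (sq_nonneg c), Real.sqrt_sq_eq_abs]

theorem exists_qnorm_mulVec_le (hQ : Q.PosDef) (M : Matrix (Fin n) (Fin n) ℝ) :
    ∃ c, 0 ≤ c ∧ ∀ x, qnorm Q (M *ᵥ x) ≤ c * qnorm Q x := by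
  -- `qOpNorm` is an `sInf`, so without some bound it would be the junk value `0`; a bound exists
  -- because `qnorm Q` is the norm of the inner product `Matrix.toInnerProductSpace Q`.
  have hnorm (x : Fin n → ℝ) : @norm _ (Q.toNormedAddCommGroup hQ).toNorm x = qnorm Q x := by
    change √(Q *ᵥ x ⬝ᵥ star x) = _
    rw [qnorm, dotProduct_comm, star_trivial]
  obtain ⟨c, hc, hbound⟩ := @LinearMap.exists_bound_of_finiteDimensional ℝ _ _ _ _
    (Q.toNormedAddCommGroup hQ) (Q.toInnerProductSpace hQ.posSemidef).toNormedSpace _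
    (Q.toNormedAddCommGroup hQ) (Q.toInnerProductSpace hQ.posSemidef).toNormedSpace
    (Matrix.toLin' M)
  exact ⟨c, hc, fun x => by simpa only [hnorm, toLin'_apply] using hbound x⟩

theorem qOpNorm_nonneg (Q M : Matrix (Fin n) (Fin n) ℝ) : 0 ≤ qOpNorm Q M :=
  Real.sInf_nonneg fun _ hc => hc.1

theorem qOpNorm_le {M : Matrix (Fin n) (Fin n) ℝ} {c : ℝ} (hc : 0 ≤ c)
    (h : ∀ x, qnorm Q (M *ᵥ x) ≤ c * qnorm Q x) : qOpNorm Q M ≤ c :=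
  csInf_le ⟨0, fun _ hd => hd.1⟩ ⟨hc, h⟩

theorem qnorm_mulVec_le_qOpNorm_mul (hQ : Q.PosDef) (M : Matrix (Fin n) (Fin n) ℝ)
    (x : Fin n → ℝ) : qnorm Q (M *ᵥ x) ≤ qOpNorm Q M * qnorm Q x := by
  obtain ⟨c, hc, hbound⟩ := exists_qnorm_mulVec_le hQ M
  rcases (qnorm_nonneg Q x).eq_or_lt with hx | hx
  · simpa only [← hx, mul_zero] using hbound x
  · rw [← div_le_iff₀ hx]
    exact le_csInf ⟨c, hc, hbound⟩ fun d hd => (div_le_iff₀ hx).mpr (hd.2 x)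

theorem qnorm_le_qnorm_one_sub_mulVec (hQ : Q.PosSemidef) (hA : Q * A + Aᵀ * Q = 0)
    (x : Fin n → ℝ) : qnorm Q x ≤ qnorm Q ((1 - A) *ᵥ x) := by
  refine Real.sqrt_le_sqrt ?_
  rw [dotProduct_mulVec_one_sub_mulVec hA]
  exact le_add_of_nonneg_right (by simpa using hQ.dotProduct_mulVec_nonneg (A *ᵥ x))

theorem isUnit_det_one_sub (hQ : Q.PosDef) (hA : Q * A + Aᵀ * Q = 0) : IsUnit (1 - A).det := by
  rw [isUnit_iff_ne_zero, Ne, ← exists_mulVec_eq_zero_iff]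
  rintro ⟨x, hx, hAx⟩
  have := qnorm_le_qnorm_one_sub_mulVec hQ.posSemidef hA x
  rw [hAx] at this
  exact (qnorm_pos hQ hx).not_ge (by simpa [qnorm] using this)

theorem qnorm_inv_one_sub_mulVec_le (hQ : Q.PosDef) (hA : Q * A + Aᵀ * Q = 0)
    (x : Fin n → ℝ) : qnorm Q ((1 - A)⁻¹ *ᵥ x) ≤ qnorm Q x := by
  have := qnorm_le_qnorm_one_sub_mulVec hQ.posSemidef hA ((1 - A)⁻¹ *ᵥ x)
  rwa [mulVec_mulVec, mul_nonsing_inv _ (isUnit_det_one_sub hQ hA), one_mulVec] at this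

theorem cayley_eq (hA : IsUnit (1 - A).det) : cayley A = (2 : ℝ) • (1 - A)⁻¹ - 1 := by
  have hsplit : 1 + A = (2 : ℝ) • 1 - (1 - A) := by rw [two_smul]; abel
  rw [cayley, hsplit, mul_sub, mul_smul_comm, mul_one, nonsing_inv_mul _ hA]

theorem cayley_sub_cayley (hA : IsUnit (1 - A).det) (hB : IsUnit (1 - B).det) :
    cayley A - cayley B = (2 : ℝ) • ((1 - A)⁻¹ * (A - B) * (1 - B)⁻¹) := by
  have hAB : IsUnit (1 - A) ↔ IsUnit (1 - B) := by
    simp only [isUnit_iff_isUnit_det, hA, hB]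
  rw [cayley_eq hA, cayley_eq hB, sub_sub_sub_cancel_right, ← smul_sub, Matrix.inv_sub_inv hAB,
    sub_sub_sub_cancel_left]

end SkewCayley

/-- The Cayley transform is Lipschitz on `g_Q` with Lipschitz constant `2` with
respect to the operator norm induced by the `Q`-norm. -/
theorem stmt9 {n : ℕ} (Q A B : Matrix (Fin n) (Fin n) ℝ)
    (hQ : Q.PosDef) (hA : Q * A + Aᵀ * Q = 0) (hB : Q * B + Bᵀ * Q = 0) :
    qOpNorm Q (cayley A - cayley B) ≤ 2 * qOpNorm Q (A - B) := by
  refine qOpNorm_le (mul_nonneg zero_le_two (qOpNorm_nonneg Q _)) fun x => ?_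
  rw [cayley_sub_cayley (isUnit_det_one_sub hQ hA) (isUnit_det_one_sub hQ hB), smul_mulVec,
    qnorm_smul, abs_two, ← mulVec_mulVec, ← mulVec_mulVec, mul_assoc]
  gcongr
  calc qnorm Q ((1 - A)⁻¹ *ᵥ ((A - B) *ᵥ ((1 - B)⁻¹ *ᵥ x)))
      ≤ qnorm Q ((A - B) *ᵥ ((1 - B)⁻¹ *ᵥ x)) := qnorm_inv_one_sub_mulVec_le hQ hA _
    _ ≤ qOpNorm Q (A - B) * qnorm Q ((1 - B)⁻¹ *ᵥ x) := qnorm_mulVec_le_qOpNorm_mul hQ _ _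
    _ ≤ qOpNorm Q (A - B) * qnorm Q x := by
      gcongr
      exacts [qOpNorm_nonneg Q _, qnorm_inv_one_sub_mulVec_le hQ hB x]
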